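/- arXiv:2303.02308 — 3 statements merged into one kernel-verified Lean document; each statement's English description precedes it below -/
import Mathlib

section
/- Let P (the set of propagation paths) and K (the set of antenna elements) be finite nonempty index sets with |K| = n, let ρ ≥ 0 (transmit power), σ ≥ 0, and let g : P → ℝ (antenna gains) and ψ : P × K → ℝ (deterministic per-path per-antenna phases, encoding array geometry and beamforming weights) be given. On a probability space let (α_p)_{p∈P} be nonnegative integrable random variables, let (ω_p)_{p∈P} be i.i.d. with the uniform distribution on [-π, π], and let (ε_k)_{k∈K} be i.i.d. with distribution N(0, σ²), such that the three families (α_p), (ω_p), (ε_k) are mutually independent. Define the random variable rsrp = ρ·[(Σ_{p∈P} √(α_p)·g_p·Σ_{k∈K} cos(ψ_{p,k} + ω_p + ε_k))² + (Σ_{p∈P} √(α_p)·g_p·Σ_{k∈K} sin(ψ_{p,k} + ω_p + ε_k))²]. Then E[rsrp] = Σ_{p∈P} A_p · E[α_p], where A_p = ρ·g_p²·( n·(1 − e^{−σ²}) + e^{−σ²}·Σ_{k∈K} Σ_{l∈K} cos(ψ_{p,k} − ψ_{p,l}) ). -/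
open MeasureTheory ProbabilityTheory Real

/-- The uniform distribution on `[-π, π]`: density `1/(2π)` on the interval, zero elsewhere. -/
noncomputable def uniformNegPiPi : Measure ℝ :=
  ENNReal.ofReal (1 / (2 * Real.pi)) • (volume.restrict (Set.Icc (-Real.pi) Real.pi))

/-!
Expanding the squares, the RSRP is `ρ Σ_{(p,k),(q,l)} g_p g_q √α_p √α_q cos(θ_{pk} - θ_{ql})`
with `θ_{pk} = ψ_{pk} + ω_p + ε_k`. The gains are independent of the phases, so each term factors,
and `E cos(c + X) = Re(e^{ic} φ_X(1))` for the characteristic function `φ_X`. Since the `ω` and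
`ε` families are independent, `φ` of `(ω_p - ω_q) + (ε_k - ε_l)` is a product. For `p ≠ q` it
vanishes because `φ_{ω_p}(1) = 0` for the uniform law on `[-π, π]`; for `p = q` and `k ≠ l` it is
`|φ_{ε_k}(1)|² = e^{-σ²}`.
-/

open ComplexConjugate

theorem sq_sum_mul_cos_add_sq_sum_mul_sin {ι : Type*} [Fintype ι] (r θ : ι → ℝ) :
    (∑ i, r i * cos (θ i)) ^ 2 + (∑ i, r i * sin (θ i)) ^ 2 =
      ∑ i, ∑ j, r i * r j * cos (θ i - θ j) := by
  simp only [sq, Finset.sum_mul_sum, ← Finset.sum_add_distrib, cos_sub]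
  exact Finset.sum_congr rfl fun i _ => Finset.sum_congr rfl fun j _ => by ring

theorem sq_sum_mul_sum_cos_add_sq_sum_mul_sum_sin {P K : Type*} [Fintype P] [Fintype K]
    (s g : P → ℝ) (θ : P → K → ℝ) :
    (∑ p, s p * g p * ∑ k, cos (θ p k)) ^ 2 + (∑ p, s p * g p * ∑ k, sin (θ p k)) ^ 2 =
      ∑ i : P × K, ∑ j : P × K, g i.1 * g j.1 * (s i.1 * s j.1 * cos (θ i.1 i.2 - θ j.1 j.2)) := by
  simp only [Finset.mul_sum]
  rw [← Fintype.sum_prod_type', ← Fintype.sum_prod_type', sq_sum_mul_cos_add_sq_sum_mul_sin]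
  exact Finset.sum_congr rfl fun i _ => Finset.sum_congr rfl fun j _ => by ring

theorem sum_sum_cos_sub_mul_ite {K : Type*} [Fintype K] [DecidableEq K] (e : ℝ) (φ : K → ℝ) :
    ∑ k, ∑ l, cos (φ k - φ l) * (if k = l then 1 else e) =
      Fintype.card K * (1 - e) + e * ∑ k, ∑ l, cos (φ k - φ l) := by
  have hsplit : ∀ k l, cos (φ k - φ l) * (if k = l then 1 else e) =
      (if k = l then 1 - e else 0) + e * cos (φ k - φ l) := by
    intro k l
    split_ifs with hkl
    · simp [hkl]
    · ring
  simp [hsplit, Finset.sum_add_distrib, Finset.mul_sum]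
  ring

theorem sum_sum_mul_cos_sub_mul_ite {P K : Type*} [Fintype P] [Fintype K] [DecidableEq P]
    [DecidableEq K] (w b : P → ℝ) (ψ : P × K → ℝ) (e : ℝ) :
    ∑ i : P × K, ∑ j : P × K, w i.1 * w j.1 *
        (cos (ψ i - ψ j) * ((if i.1 = j.1 then b i.1 else 0) * if i.2 = j.2 then 1 else e)) =
      ∑ p, w p ^ 2 * (Fintype.card K * (1 - e) + e * ∑ k, ∑ l, cos (ψ (p, k) - ψ (p, l))) * b p := by
  rw [Fintype.sum_prod_type]
  refine Finset.sum_congr rfl fun p _ => ?_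
  rw [← sum_sum_cos_sub_mul_ite _ fun k => ψ (p, k), Finset.mul_sum, Finset.sum_mul]
  refine Finset.sum_congr rfl fun k _ => ?_
  rw [Fintype.sum_prod_type, Fintype.sum_eq_single p fun q hq => by simp [Ne.symm hq],
    Finset.mul_sum, Finset.sum_mul]
  exact Finset.sum_congr rfl fun l _ => by simp only [if_true]; ring

theorem charFun_uniformNegPiPi_one : charFun uniformNegPiPi 1 = 0 := by
  rw [uniformNegPiPi, charFun_apply_real, integral_smul_measure, integral_Icc_eq_integral_Ioc,
    ← intervalIntegral.integral_of_le (by linarith [pi_pos])]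
  simp only [Complex.ofReal_one, one_mul]
  simp_rw [mul_comm _ Complex.I]
  rw [integral_exp_mul_complex Complex.I_ne_zero]
  simp [Complex.exp_pi_mul_I, mul_comm Complex.I, Complex.exp_neg_pi_mul_I]

section

variable {Ω : Type*} [MeasurableSpace Ω] {μ : Measure Ω}

theorem integral_cos_const_add_eq_re_charFun [IsFiniteMeasure μ] {X : Ω → ℝ}
    (hX : AEMeasurable X μ) (c : ℝ) :
    ∫ x, cos (c + X x) ∂μ = (Complex.exp (c * Complex.I) * charFun (μ.map X) 1).re := by
  rw [charFun_apply_real, integral_map hX (by fun_prop), ← integral_const_mul,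
    ← Complex.reCLM_apply, ← ContinuousLinearMap.integral_comp_comm]
  · simp [← Complex.exp_add, ← add_mul, ← Complex.ofReal_add, Complex.exp_ofReal_mul_I_re]
  · refine (integrable_const (1 : ℝ)).mono' (by fun_prop) (ae_of_all _ fun x => ?_)
    rw [← Complex.exp_add, ← add_mul]
    simp [← Complex.ofReal_add, Complex.norm_exp_ofReal_mul_I]

theorem ProbabilityTheory.IndepFun.charFun_map_sub [IsFiniteMeasure μ] {X Y : Ω → ℝ}
    (hX : AEMeasurable X μ) (hY : AEMeasurable Y μ) (hXY : IndepFun X Y μ) (t : ℝ) :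
    charFun (μ.map fun x => X x - Y x) t = charFun (μ.map X) t * conj (charFun (μ.map Y) t) := by
  have hnegY : IndepFun X (fun x => -1 * Y x) μ :=
    hXY.comp measurable_id (measurable_const_mul (-1))
  simp_rw [sub_eq_add_neg, neg_eq_neg_one_mul (Y _)]
  rw [hnegY.charFun_map_fun_add_eq_mul hX (hY.const_mul _), Pi.mul_apply,
    charFun_map_mul_comp hY, neg_one_mul, charFun_neg]

theorem ProbabilityTheory.iIndepFun.charFun_map_sub_of_map_eq [IsProbabilityMeasure μ]
    {ι : Type*} [DecidableEq ι] {X : ι → Ω → ℝ} {ν : Measure ℝ} (hXm : ∀ i, Measurable (X i))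
    (hX : iIndepFun X μ) (hXν : ∀ i, μ.map (X i) = ν) (t : ℝ) (i j : ι) :
    charFun (μ.map fun x => X i x - X j x) t =
      if i = j then 1 else (Complex.normSq (charFun ν t) : ℂ) := by
  split_ifs with hij
  · subst hij
    simp [Measure.map_const]
  · rw [(hX.indepFun hij).charFun_map_sub (hXm i).aemeasurable (hXm j).aemeasurable, hXν, hXν,
      Complex.mul_conj]

theorem charFun_map_sub_of_uniformNegPiPi [IsProbabilityMeasure μ] {ι : Type*} [DecidableEq ι]
    {ω : ι → Ω → ℝ} (hωm : ∀ i, Measurable (ω i)) (hω : iIndepFun ω μ)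
    (hωdist : ∀ i, μ.map (ω i) = uniformNegPiPi) (i j : ι) :
    charFun (μ.map fun x => ω i x - ω j x) 1 = if i = j then 1 else 0 := by
  rw [hω.charFun_map_sub_of_map_eq hωm hωdist, charFun_uniformNegPiPi_one]
  simp

theorem charFun_map_sub_of_gaussianReal [IsProbabilityMeasure μ] {ι : Type*} [DecidableEq ι]
    {ε : ι → Ω → ℝ} {v : NNReal} (hεm : ∀ i, Measurable (ε i)) (hε : iIndepFun ε μ)
    (hεdist : ∀ i, μ.map (ε i) = gaussianReal 0 v) (i j : ι) :
    charFun (μ.map fun x => ε i x - ε j x) 1 = if i = j then 1 else ((exp (-v) : ℝ) : ℂ) := by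
  rw [hε.charFun_map_sub_of_map_eq hεm hεdist, charFun_gaussianReal]
  congr 1
  rw [show ((1 : ℝ) : ℂ) * ((0 : ℝ) : ℂ) * Complex.I - v * (1 : ℝ) ^ 2 / 2 = ((-v / 2 : ℝ) : ℂ) by
    push_cast; ring, ← Complex.ofReal_exp, Complex.normSq_ofReal, ← exp_add]
  norm_num

theorem ProbabilityTheory.Indep.indepFun_of_measurable {β γ : Type*} [MeasurableSpace β]
    [MeasurableSpace γ] {m₁ m₂ : MeasurableSpace Ω} (h : Indep m₁ m₂ μ) {f : Ω → β} {g : Ω → γ}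
    (hf : Measurable[m₁] f) (hg : Measurable[m₂] g) : IndepFun f g μ :=
  (IndepFun_iff_Indep f g μ).2 (indep_of_indep_of_le h hf.comap_le hg.comap_le)

theorem ProbabilityTheory.iIndep.indep_zero_sup [IsZeroOrProbabilityMeasure μ]
    {m : Fin 3 → MeasurableSpace Ω} (h_le : ∀ i, m i ≤ ‹MeasurableSpace Ω›) (h : iIndep m μ) :
    Indep (m 0) (m 1 ⊔ m 2) μ := by
  simpa [iSup_insert] using indep_iSup_of_disjoint h_le h (S := {0}) (T := {1, 2}) (by simp)

theorem MeasureTheory.Integrable.sqrt_mul_sqrt {f g : Ω → ℝ} (hf : Integrable f μ)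
    (hg : Integrable g μ) : Integrable (fun x => √(f x) * √(g x)) μ := by
  refine ((hf.abs.add hg.abs).div_const 2).mono'
    ((continuous_sqrt.comp_aestronglyMeasurable hf.aestronglyMeasurable).mul
      (continuous_sqrt.comp_aestronglyMeasurable hg.aestronglyMeasurable)) (ae_of_all _ fun x => ?_)
  have hfx := Real.sqrt_le_sqrt (le_abs_self (f x))
  have hgx := Real.sqrt_le_sqrt (le_abs_self (g x))
  rw [Real.norm_of_nonneg (by positivity), Pi.add_apply]
  nlinarith [Real.sq_sqrt (abs_nonneg (f x)), Real.sq_sqrt (abs_nonneg (g x)),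
    sq_nonneg (√|f x| - √|g x|), mul_le_mul hfx hgx (Real.sqrt_nonneg _) (Real.sqrt_nonneg _)]

theorem integral_cos_phase_sub [IsProbabilityMeasure μ] {P K : Type*} [DecidableEq P]
    [DecidableEq K] {ω : P → Ω → ℝ} {ε : K → Ω → ℝ} {v : NNReal}
    (hωm : ∀ p, Measurable (ω p)) (hεm : ∀ k, Measurable (ε k))
    (hω : iIndepFun ω μ) (hωdist : ∀ p, μ.map (ω p) = uniformNegPiPi)
    (hε : iIndepFun ε μ) (hεdist : ∀ k, μ.map (ε k) = gaussianReal 0 v)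
    (hωε : Indep (⨆ p, MeasurableSpace.comap (ω p) inferInstance)
      (⨆ k, MeasurableSpace.comap (ε k) inferInstance) μ)
    (c₁ c₂ : ℝ) (p q : P) (k l : K) :
    ∫ x, cos (c₁ + ω p x + ε k x - (c₂ + ω q x + ε l x)) ∂μ =
      cos (c₁ - c₂) * ((if p = q then 1 else 0) * (if k = l then 1 else exp (-v))) := by
  have hind : IndepFun (fun x => ω p x - ω q x) (fun x => ε k x - ε l x) μ :=
    hωε.indepFun_of_measurable
      (((comap_measurable _).iSup' p).sub ((comap_measurable _).iSup' q))
      (((comap_measurable _).iSup' k).sub ((comap_measurable _).iSup' l))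
  have hphase : ∀ x, c₁ + ω p x + ε k x - (c₂ + ω q x + ε l x) =
      (c₁ - c₂) + ((ω p x - ω q x) + (ε k x - ε l x)) := fun x => by ring
  simp_rw [hphase]
  rw [integral_cos_const_add_eq_re_charFun (by fun_prop),
    hind.charFun_map_fun_add_eq_mul (by fun_prop) (by fun_prop), Pi.mul_apply,
    charFun_map_sub_of_uniformNegPiPi hωm hω hωdist, charFun_map_sub_of_gaussianReal hεm hε hεdist]
  split_ifs <;> simp only [mul_one, mul_zero, zero_mul, one_mul, Complex.zero_re,
    Complex.re_mul_ofReal, Complex.exp_ofReal_mul_I_re]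

theorem integral_sqrt_mul_sqrt_mul_cos_phase_sub [IsProbabilityMeasure μ] {P K : Type*}
    [DecidableEq P] [DecidableEq K] {α ω : P → Ω → ℝ} {ε : K → Ω → ℝ} {v : NNReal}
    (hαm : ∀ p, Measurable (α p)) (hα0 : ∀ p x, 0 ≤ α p x)
    (hωm : ∀ p, Measurable (ω p)) (hεm : ∀ k, Measurable (ε k))
    (hω : iIndepFun ω μ) (hωdist : ∀ p, μ.map (ω p) = uniformNegPiPi)
    (hε : iIndepFun ε μ) (hεdist : ∀ k, μ.map (ε k) = gaussianReal 0 v)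
    (hωε : Indep (⨆ p, MeasurableSpace.comap (ω p) inferInstance)
      (⨆ k, MeasurableSpace.comap (ε k) inferInstance) μ)
    (hαωε : Indep (⨆ p, MeasurableSpace.comap (α p) inferInstance)
      ((⨆ p, MeasurableSpace.comap (ω p) inferInstance) ⊔
        ⨆ k, MeasurableSpace.comap (ε k) inferInstance) μ)
    (c₁ c₂ : ℝ) (p q : P) (k l : K) :
    ∫ x, √(α p x) * √(α q x) * cos (c₁ + ω p x + ε k x - (c₂ + ω q x + ε l x)) ∂μ =
      cos (c₁ - c₂) *
        ((if p = q then ∫ x, α p x ∂μ else 0) * (if k = l then 1 else exp (-v))) := by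
  have hω' : ∀ p, Measurable[(⨆ p, MeasurableSpace.comap (ω p) inferInstance) ⊔
      ⨆ k, MeasurableSpace.comap (ε k) inferInstance] (ω p) :=
    fun p => ((comap_measurable _).iSup' p).sup_of_left
  have hε' : ∀ k, Measurable[(⨆ p, MeasurableSpace.comap (ω p) inferInstance) ⊔
      ⨆ k, MeasurableSpace.comap (ε k) inferInstance] (ε k) :=
    fun k => ((comap_measurable _).iSup' k).sup_of_right
  have hind : IndepFun (fun x => √(α p x) * √(α q x))
      (fun x => cos (c₁ + ω p x + ε k x - (c₂ + ω q x + ε l x))) μ :=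
    hαωε.indepFun_of_measurable
      (((comap_measurable _).iSup' p).sqrt.mul ((comap_measurable _).iSup' q).sqrt)
      (continuous_cos.measurable.comp (((measurable_const.add (hω' p)).add (hε' k)).sub
        ((measurable_const.add (hω' q)).add (hε' l))))
  rw [hind.integral_fun_mul_eq_mul_integral (by fun_prop) (by fun_prop),
    integral_cos_phase_sub hωm hεm hω hωdist hε hεdist hωε]
  by_cases hpq : p = q
  · subst hpq
    have hsq : ∀ x, √(α p x) * √(α p x) = α p x := fun x => Real.mul_self_sqrt (hα0 p x)
    simp only [hsq, if_true]
    ring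
  · simp [hpq]

end

theorem expected_rsrp_eq_sum_coeff_mul_expected_gain_general {Ωs : Type*} [MeasurableSpace Ωs]
    (μ : Measure Ωs) [IsProbabilityMeasure μ]
    {P K : Type*} [Fintype P] [Fintype K]
    (ρ σ : ℝ) (g : P → ℝ) (ψ : P × K → ℝ)
    (α : P → Ωs → ℝ) (ω : P → Ωs → ℝ) (ε : K → Ωs → ℝ)
    (hαm : ∀ p, Measurable (α p)) (hα0 : ∀ p x, 0 ≤ α p x)
    (hαint : ∀ p, Integrable (α p) μ)
    (hωm : ∀ p, Measurable (ω p)) (hεm : ∀ k, Measurable (ε k))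
    (hωind : iIndepFun ω μ)
    (hωdist : ∀ p, μ.map (ω p) = uniformNegPiPi)
    (hεind : iIndepFun ε μ)
    (hεdist : ∀ k, μ.map (ε k) = gaussianReal 0 (σ ^ 2).toNNReal)
    (hfam : iIndep
      ![⨆ p, MeasurableSpace.comap (α p) inferInstance,
        ⨆ p, MeasurableSpace.comap (ω p) inferInstance,
        ⨆ k, MeasurableSpace.comap (ε k) inferInstance] μ) :
    ∫ x, ρ *
        ((∑ p, Real.sqrt (α p x) * g p * ∑ k, Real.cos (ψ (p, k) + ω p x + ε k x)) ^ 2 +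
          (∑ p, Real.sqrt (α p x) * g p * ∑ k, Real.sin (ψ (p, k) + ω p x + ε k x)) ^ 2) ∂μ =
      ∑ p, (ρ * g p ^ 2 *
          ((Fintype.card K : ℝ) * (1 - Real.exp (-σ ^ 2)) +
            Real.exp (-σ ^ 2) * ∑ k, ∑ l, Real.cos (ψ (p, k) - ψ (p, l)))) *
        ∫ x, α p x ∂μ := by
  classical
  have hαωε := hfam.indep_zero_sup fun i => by
    fin_cases i
    exacts [iSup_le fun p => (hαm p).comap_le, iSup_le fun p => (hωm p).comap_le,
      iSup_le fun k => (hεm k).comap_le]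
  have hωε := hfam.indep (by decide : (1 : Fin 3) ≠ 2)
  have hσ : ((σ ^ 2).toNNReal : ℝ) = σ ^ 2 := Real.coe_toNNReal _ (sq_nonneg σ)
  have hint : ∀ i j : P × K, Integrable (fun x => g i.1 * g j.1 * (√(α i.1 x) * √(α j.1 x) *
      cos (ψ (i.1, i.2) + ω i.1 x + ε i.2 x - (ψ (j.1, j.2) + ω j.1 x + ε j.2 x)))) μ :=
    fun i j => (((hαint i.1).sqrt_mul_sqrt (hαint j.1)).mul_bdd (c := 1) (by fun_prop)
      (ae_of_all _ fun x => by simpa using abs_cos_le_one _)).const_mul _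
  simp_rw [sq_sum_mul_sum_cos_add_sq_sum_mul_sum_sin, integral_const_mul]
  rw [integral_finsetSum _ fun i _ => integrable_finsetSum _ fun j _ => hint i j]
  simp_rw [integral_finsetSum _ fun j _ => hint _ j, integral_const_mul,
    integral_sqrt_mul_sqrt_mul_cos_phase_sub hαm hα0 hωm hεm hωind hωdist hεind hεdist hωε hαωε,
    hσ]
  simp only [Prod.mk.eta]
  rw [sum_sum_mul_cos_sub_mul_ite g fun p => ∫ x, α p x ∂μ, Finset.mul_sum]
  exact Finset.sum_congr rfl fun p _ => by ring

/-- Theorem 1 of the paper: with nonnegative integrable random channel gains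
`α_p`, i.i.d. per-path phases `ω_p` uniform on `[-π, π]`, i.i.d. per-antenna Gaussian phase
errors `ε_k ~ N(0, σ²)`, and the three families `(α_p)`, `(ω_p)`, `(ε_k)` mutually
independent (encoded as independence of the three σ-algebras generated by the families),
the expected RSRP
`E[ρ ((Σ_p √α_p g_p Σ_k cos(ψ_{p,k} + ω_p + ε_k))² + (Σ_p √α_p g_p Σ_k sin(ψ_{p,k} + ω_p + ε_k))²)]`
equals `Σ_p A_p E[α_p]`, where
`A_p = ρ g_p² (n (1 − e^{−σ²}) + e^{−σ²} Σ_k Σ_l cos(ψ_{p,k} − ψ_{p,l}))` and `n = |K|`. -/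
theorem expected_rsrp_eq_sum_coeff_mul_expected_gain {Ωs : Type*} [MeasurableSpace Ωs]
    (μ : Measure Ωs) [IsProbabilityMeasure μ]
    {P K : Type*} [Fintype P] [Nonempty P] [Fintype K] [Nonempty K]
    (ρ σ : ℝ) (hρ : 0 ≤ ρ) (hσ : 0 ≤ σ) (g : P → ℝ) (ψ : P × K → ℝ)
    (α : P → Ωs → ℝ) (ω : P → Ωs → ℝ) (ε : K → Ωs → ℝ)
    (hαm : ∀ p, Measurable (α p)) (hα0 : ∀ p x, 0 ≤ α p x)
    (hαint : ∀ p, Integrable (α p) μ)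
    (hωm : ∀ p, Measurable (ω p)) (hεm : ∀ k, Measurable (ε k))
    (hωind : iIndepFun ω μ)
    (hωdist : ∀ p, μ.map (ω p) = uniformNegPiPi)
    (hεind : iIndepFun ε μ)
    (hεdist : ∀ k, μ.map (ε k) = gaussianReal 0 (σ ^ 2).toNNReal)
    (hfam : iIndep
      ![⨆ p, MeasurableSpace.comap (α p) inferInstance,
        ⨆ p, MeasurableSpace.comap (ω p) inferInstance,
        ⨆ k, MeasurableSpace.comap (ε k) inferInstance] μ) :
    ∫ x, ρ *
        ((∑ p, Real.sqrt (α p x) * g p * ∑ k, Real.cos (ψ (p, k) + ω p x + ε k x)) ^ 2 +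
          (∑ p, Real.sqrt (α p x) * g p * ∑ k, Real.sin (ψ (p, k) + ω p x + ε k x)) ^ 2) ∂μ =
      ∑ p, (ρ * g p ^ 2 *
          ((Fintype.card K : ℝ) * (1 - Real.exp (-σ ^ 2)) +
            Real.exp (-σ ^ 2) * ∑ k, ∑ l, Real.cos (ψ (p, k) - ψ (p, l)))) *
        ∫ x, α p x ∂μ :=
  expected_rsrp_eq_sum_coeff_mul_expected_gain_general μ ρ σ g ψ α ω ε hαm hα0 hαint hωm hεm hωind
    hωdist hεind hεdist hfam
end

section
/- Let K be a finite index set with |K| = n, let σ ≥ 0, let ψ : K → ℝ, and let (ε_k)_{k∈K} be i.i.d. real random variables with distribution N(0, σ²). Then Σ_{k∈K} Σ_{l∈K} E[cos(ψ_k + ε_k − ψ_l − ε_l)] = n·(1 − e^{−σ²}) + e^{−σ²} · Σ_{k∈K} Σ_{l∈K} cos(ψ_k − ψ_l). -/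
/-!
For `k ≠ l` the phase `(ψ k + ε k) - (ψ l + ε l)` is a difference of independent Gaussians, hence
Gaussian with mean `ψ k - ψ l` and variance `2σ²`; the expectation of `cos` of a Gaussian is the
real part of its characteristic function at `1`, namely `cos (mean) * exp (-variance / 2)`.
The diagonal terms are `cos 0 = 1`.
-/

open MeasureTheory ProbabilityTheory Real
open scoped NNReal

lemma integral_cos_gaussianReal (m : ℝ) (v : ℝ≥0) :
    ∫ x, cos x ∂gaussianReal m v = cos m * exp (-v / 2) := by
  have hint : Integrable (fun x : ℝ => Complex.exp (1 * x * Complex.I)) (gaussianReal m v) :=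
    Integrable.of_bound (by fun_prop) 1 (ae_of_all _ fun x => by
      simp [Complex.norm_exp_ofReal_mul_I])
  calc ∫ x, cos x ∂gaussianReal m v
      = ∫ x, (Complex.exp (1 * x * Complex.I)).re ∂gaussianReal m v := by
        simp [Complex.exp_ofReal_mul_I_re]
    _ = (charFun (gaussianReal m v) 1).re := by
        rw [charFun_apply_real]; exact integral_re hint
    _ = cos m * exp (-v / 2) := by
        rw [charFun_gaussianReal, Complex.exp_re]
        simp [neg_div, mul_comm]

lemma ProbabilityTheory.IndepFun.hasLaw_sub_gaussianReal {Ω : Type*} {mΩ : MeasurableSpace Ω}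
    {P : Measure Ω} {X Y : Ω → ℝ} {m₁ m₂ : ℝ} {v₁ v₂ : ℝ≥0} (hXY : IndepFun X Y P)
    (hX : HasLaw X (gaussianReal m₁ v₁) P) (hY : HasLaw Y (gaussianReal m₂ v₂) P) :
    HasLaw (X - Y) (gaussianReal (m₁ - m₂) (v₁ + v₂)) P := by
  have h := (hXY.comp measurable_id measurable_neg).hasLaw_add hX (gaussianReal_neg hY)
  simpa [gaussianReal_conv_gaussianReal, sub_eq_add_neg] using h

lemma integral_cos_sub_of_indepFun_gaussianReal {Ω : Type*} {mΩ : MeasurableSpace Ω}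
    {P : Measure Ω} {X Y : Ω → ℝ} {m₁ m₂ : ℝ} {v₁ v₂ : ℝ≥0} (hXY : IndepFun X Y P)
    (hX : HasLaw X (gaussianReal m₁ v₁) P) (hY : HasLaw Y (gaussianReal m₂ v₂) P) :
    ∫ ω, cos (X ω - Y ω) ∂P = cos (m₁ - m₂) * exp (-(v₁ + v₂) / 2) := by
  have h := (hXY.hasLaw_sub_gaussianReal hX hY).integral_comp (f := cos) (by fun_prop)
  rw [integral_cos_gaussianReal, NNReal.coe_add] at h
  exact h

lemma Finset.sum_sum_ite_eq_card_mul_add {K R : Type*} [Fintype K] [DecidableEq K] [CommRing R]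
    (c : R) (f : K → K → R) (hf : ∀ k, f k k = 1) :
    ∑ k, ∑ l, (if k = l then 1 else c * f k l) =
      Fintype.card K * (1 - c) + c * ∑ k, ∑ l, f k l := by
  have hsplit : ∀ k l, (if k = l then 1 else c * f k l) =
      c * f k l + if k = l then 1 - c else 0 := by
    intro k l
    split_ifs with hkl
    · rw [hkl, hf]; ring
    · rw [add_zero]
  simp only [hsplit, Finset.sum_add_distrib, Finset.sum_ite_eq, Finset.mem_univ, if_true,
    Finset.sum_const, Finset.card_univ, nsmul_eq_mul, Finset.mul_sum]
  ring

theorem double_sum_integral_cos_gaussian_general {Ω : Type*} [MeasurableSpace Ω]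
    (μ : Measure Ω) [IsProbabilityMeasure μ]
    {K : Type*} [Fintype K] (σ : ℝ) (ψ : K → ℝ) (ε : K → Ω → ℝ)
    (hεind : iIndepFun ε μ)
    (hεdist : ∀ k, μ.map (ε k) = gaussianReal 0 (σ ^ 2).toNNReal) :
    ∑ k, ∑ l, ∫ x, Real.cos (ψ k + ε k x - ψ l - ε l x) ∂μ =
      (Fintype.card K : ℝ) * (1 - Real.exp (-σ ^ 2)) +
        Real.exp (-σ ^ 2) * ∑ k, ∑ l, Real.cos (ψ k - ψ l) := by
  classical
  have hlaw : ∀ k, HasLaw (fun x ↦ ψ k + ε k x) (gaussianReal (ψ k) (σ ^ 2).toNNReal) μ := by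
    intro k
    simpa using gaussianReal_const_add
      ⟨aemeasurable_of_map_neZero (by rw [hεdist k]; infer_instance), hεdist k⟩ (ψ k)
  have hterm : ∀ k l, ∫ x, cos (ψ k + ε k x - ψ l - ε l x) ∂μ =
      if k = l then 1 else exp (-σ ^ 2) * cos (ψ k - ψ l) := by
    intro k l
    split_ifs with hkl
    · simp [hkl]
    · simp_rw [sub_sub]
      have hind : IndepFun (fun x ↦ ψ k + ε k x) (fun x ↦ ψ l + ε l x) μ :=
        (hεind.indepFun hkl).comp (measurable_const_add _) (measurable_const_add _)
      rw [integral_cos_sub_of_indepFun_gaussianReal hind (hlaw k) (hlaw l),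
        Real.coe_toNNReal _ (sq_nonneg σ), mul_comm]
      ring_nf
  simp only [hterm]
  exact Finset.sum_sum_ite_eq_card_mul_add _ _ fun k ↦ by simp

/-- for i.i.d. Gaussian phase errors `ε_k ~ N(0, σ²)` and phases `ψ_k`,
`Σ_k Σ_l E[cos (ψ_k + ε_k − ψ_l − ε_l)]
  = n (1 − e^{−σ²}) + e^{−σ²} Σ_k Σ_l cos (ψ_k − ψ_l)`, where `n = |K|`. -/
theorem double_sum_integral_cos_gaussian {Ω : Type*} [MeasurableSpace Ω]
    (μ : Measure Ω) [IsProbabilityMeasure μ]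
    {K : Type*} [Fintype K] (σ : ℝ) (hσ : 0 ≤ σ) (ψ : K → ℝ) (ε : K → Ω → ℝ)
    (hεm : ∀ k, Measurable (ε k))
    (hεind : iIndepFun ε μ)
    (hεdist : ∀ k, μ.map (ε k) = gaussianReal 0 (σ ^ 2).toNNReal) :
    ∑ k, ∑ l, ∫ x, Real.cos (ψ k + ε k x - ψ l - ε l x) ∂μ =
      (Fintype.card K : ℝ) * (1 - Real.exp (-σ ^ 2)) +
        Real.exp (-σ ^ 2) * ∑ k, ∑ l, Real.cos (ψ k - ψ l) :=
  double_sum_integral_cos_gaussian_general μ σ ψ ε hεind hεdist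
end

section
/- Let K be a finite index set with |K| = n, let σ ≥ 0, let ψ : K → ℝ, and let (ε_k)_{k∈K} be i.i.d. real random variables with distribution N(0, σ²). Then E[ (Σ_{k∈K} cos(ψ_k + ε_k))² + (Σ_{k∈K} sin(ψ_k + ε_k))² ] = n·(1 − e^{−σ²}) + e^{−σ²} · Σ_{k∈K} Σ_{l∈K} cos(ψ_k − ψ_l). -/
/-!
Expanding the squares turns the integrand into `∑ k, ∑ l, cos (ψ k + ε k - (ψ l + ε l))`.
The diagonal terms are `1`. For `k ≠ l`, independence makes `ε k - ε l` a centred Gaussian of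
variance `2σ²`, and `E[cos (a + X)] = e^{-v/2} cos a` for `X ~ N(0, v)` is the real part of
`e^{ia}` times the characteristic function of `X` at `1`.
-/

open MeasureTheory ProbabilityTheory Real
open scoped NNReal

lemma sq_sum_cos_add_sq_sum_sin {ι : Type*} (s : Finset ι) (θ : ι → ℝ) :
    (∑ k ∈ s, cos (θ k)) ^ 2 + (∑ k ∈ s, sin (θ k)) ^ 2 =
      ∑ k ∈ s, ∑ l ∈ s, cos (θ k - θ l) := by
  simp only [sq, Finset.sum_mul_sum, ← Finset.sum_add_distrib, cos_sub]

lemma integral_cos_add_gaussianReal (a m : ℝ) (v : ℝ≥0) :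
    ∫ x, cos (a + x) ∂gaussianReal m v = exp (-v / 2) * cos (a + m) := by
  have hint : Integrable (fun x : ℝ ↦ Complex.exp (↑(a + x) * Complex.I)) (gaussianReal m v) :=
    .of_bound (by fun_prop) 1 (ae_of_all _ fun x ↦ (Complex.norm_exp_ofReal_mul_I _).le)
  have hchar : ∫ x, Complex.exp (↑(a + x) * Complex.I) ∂gaussianReal m v =
      Complex.exp (↑(a + m) * Complex.I) * ↑(exp (-v / 2)) := by
    simp_rw [Complex.ofReal_add, add_mul, Complex.exp_add, integral_const_mul]
    have hφ := charFun_gaussianReal (μ := m) (v := v) 1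
    rw [charFun_apply_real] at hφ
    simp only [Complex.ofReal_one, one_mul, one_pow, mul_one] at hφ
    rw [hφ, Complex.ofReal_exp]
    simp only [← Complex.exp_add]
    congr 1
    push_cast
    ring
  calc ∫ x, cos (a + x) ∂gaussianReal m v
      = (∫ x, Complex.exp (↑(a + x) * Complex.I) ∂gaussianReal m v).re := by
        rw [← RCLike.re_to_complex, ← integral_re hint]
        simp only [RCLike.re_to_complex, Complex.exp_ofReal_mul_I_re]
    _ = exp (-v / 2) * cos (a + m) := by
        rw [hchar, mul_comm, Complex.re_ofReal_mul, Complex.exp_ofReal_mul_I_re]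

lemma integral_cos_add_sub_add_of_iIndepFun_gaussianReal {Ω ι : Type*} {mΩ : MeasurableSpace Ω}
    {P : Measure Ω} [IsProbabilityMeasure P] [DecidableEq ι] {ε : ι → Ω → ℝ} {v : ℝ≥0}
    (hind : iIndepFun ε P) (hlaw : ∀ k, HasLaw (ε k) (gaussianReal 0 v) P) (θ : ι → ℝ) (k l : ι) :
    ∫ ω, cos (θ k + ε k ω - (θ l + ε l ω)) ∂P =
      if k = l then 1 else exp (-v) * cos (θ k - θ l) := by
  split_ifs with hkl
  · simp [hkl]
  have hsub := (hind.indepFun hkl).hasLaw_sub_gaussianReal (hlaw k) (hlaw l)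
  calc ∫ ω, cos (θ k + ε k ω - (θ l + ε l ω)) ∂P
      = ∫ ω, cos (θ k - θ l + (ε k - ε l) ω) ∂P := by
        congr with ω
        rw [Pi.sub_apply]
        ring_nf
    _ = ∫ x, cos (θ k - θ l + x) ∂gaussianReal (0 - 0) (v + v) :=
        hsub.integral_comp (f := fun x ↦ cos (θ k - θ l + x)) (by fun_prop)
    _ = exp (-v) * cos (θ k - θ l) := by
        rw [integral_cos_add_gaussianReal, NNReal.coe_add, sub_zero, add_zero]
        ring_nf

theorem integral_sq_sum_cos_add_sq_sum_sin_gaussian_general {Ω : Type*} [MeasurableSpace Ω]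
    (μ : Measure Ω) [IsProbabilityMeasure μ]
    {K : Type*} [Fintype K] (σ : ℝ) (ψ : K → ℝ) (ε : K → Ω → ℝ)
    (hεind : iIndepFun ε μ)
    (hεdist : ∀ k, μ.map (ε k) = gaussianReal 0 (σ ^ 2).toNNReal) :
    ∫ x, ((∑ k, Real.cos (ψ k + ε k x)) ^ 2 + (∑ k, Real.sin (ψ k + ε k x)) ^ 2) ∂μ =
      (Fintype.card K : ℝ) * (1 - Real.exp (-σ ^ 2)) +
        Real.exp (-σ ^ 2) * ∑ k, ∑ l, Real.cos (ψ k - ψ l) := by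
  classical
  have hlaw : ∀ k, HasLaw (ε k) (gaussianReal 0 (σ ^ 2).toNNReal) μ := fun k ↦
    ⟨aemeasurable_of_map_neZero (by rw [hεdist k]; infer_instance), hεdist k⟩
  have hint : ∀ k l, Integrable (fun ω ↦ cos (ψ k + ε k ω - (ψ l + ε l ω))) μ := fun k l ↦
    .of_bound (by have := (hlaw k).aemeasurable; have := (hlaw l).aemeasurable; fun_prop) 1
      (ae_of_all _ fun _ ↦ by simpa using abs_cos_le_one _)
  have hsplit : ∀ k l, (if k = l then 1 else exp (-σ ^ 2) * cos (ψ k - ψ l)) =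
      exp (-σ ^ 2) * cos (ψ k - ψ l) + if k = l then 1 - exp (-σ ^ 2) else 0 := by
    intro k l
    split_ifs with h <;> simp [h]
  simp_rw [sq_sum_cos_add_sq_sum_sin]
  rw [integral_finsetSum _ fun k _ ↦ integrable_finsetSum _ fun l _ ↦ hint k l]
  simp_rw [integral_finsetSum _ fun l _ ↦ hint _ l,
    integral_cos_add_sub_add_of_iIndepFun_gaussianReal hεind hlaw,
    Real.coe_toNNReal _ (sq_nonneg σ), hsplit, Finset.sum_add_distrib, Finset.sum_ite_eq,
    Finset.mem_univ, if_true, Finset.sum_const, Finset.card_univ, nsmul_eq_mul, ← Finset.mul_sum]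
  ring

/-- for i.i.d. Gaussian phase errors `ε_k ~ N(0, σ²)` and phases `ψ_k`,
`E[(Σ_k cos (ψ_k + ε_k))² + (Σ_k sin (ψ_k + ε_k))²]
  = n (1 − e^{−σ²}) + e^{−σ²} Σ_k Σ_l cos (ψ_k − ψ_l)`, where `n = |K|`. -/
theorem integral_sq_sum_cos_add_sq_sum_sin_gaussian {Ω : Type*} [MeasurableSpace Ω]
    (μ : Measure Ω) [IsProbabilityMeasure μ]
    {K : Type*} [Fintype K] (σ : ℝ) (hσ : 0 ≤ σ) (ψ : K → ℝ) (ε : K → Ω → ℝ)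
    (hεm : ∀ k, Measurable (ε k))
    (hεind : iIndepFun ε μ)
    (hεdist : ∀ k, μ.map (ε k) = gaussianReal 0 (σ ^ 2).toNNReal) :
    ∫ x, ((∑ k, Real.cos (ψ k + ε k x)) ^ 2 + (∑ k, Real.sin (ψ k + ε k x)) ^ 2) ∂μ =
      (Fintype.card K : ℝ) * (1 - Real.exp (-σ ^ 2)) +
        Real.exp (-σ ^ 2) * ∑ k, ∑ l, Real.cos (ψ k - ψ l) :=
  integral_sq_sum_cos_add_sq_sum_sin_gaussian_general μ σ ψ ε hεind hεdist
end
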